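/- Let S = K[x_1,...,x_n] over a perfect infinite field K of characteristic p > 0, n ≥ 3. Suppose f ∈ S satisfies F_*f = Σ_{i=0}^{p-1} f_i · F_*(x_1^{p-1}...x_{n-1}^{p-1} x_n^i) where each f_i ∈ K[x_1,...,x_{n-1}] is homogeneous of the same degree d, and the f_i span a K-vector subspace of S_d of dimension at least 2. Let l = c_0^p + c_1^p x_1 + ... + c_n^p x_n with c_n ≠ 0, and identify S/(l) ≅ K[x_1,...,x_{n-1}] via x_n ↦ -c_n^{-p}(c_0^p + c_1^p x_1 + ... + c_{n-1}^p x_{n-1}). Then the image ideal τ(S, f^{1/p})·S/(l) differs from τ(S/(l), f̄^{1/p}): their degree-d graded pieces are different K-vector subspaces of (S/(l))_d, with the former of dimension ≥ 2 and the latter of dimension ≤ 1. -/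

import Mathlib

open MvPolynomial

/-- For `F_*S` free over `S = K[x_1,…,x_n]` with basis `{F_*(x^α) : α ∈ {0,…,p-1}^n}`,
`frobCoeff p α f` is the coefficient `s_α ∈ S` in the expansion
`F_*f = Σ_α s_α • F_*(x^α)`, i.e. `f = Σ_α s_α^p x^α`. -/
noncomputable def frobCoeff {K : Type*} [Field K] (p : ℕ) [Fact p.Prime] [ExpChar K p]
    [PerfectRing K p] {n : ℕ} (α : Fin n → ℕ) (f : MvPolynomial (Fin n) K) :
    MvPolynomial (Fin n) K :=
  ∑ d ∈ f.support,
    if ∀ i, d i % p = α i then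
      monomial (Finsupp.mapRange (· / p) (Nat.zero_div p) d)
        ((frobeniusEquiv K p).symm (f.coeff d))
    else 0

/-- The generating trace map `Φ : F_*S → S`, the `S`-linear projection onto the
coefficient of `F_*(x_1^(p-1) ⋯ x_n^(p-1))`. -/
noncomputable def phi {K : Type*} [Field K] (p : ℕ) [Fact p.Prime] [ExpChar K p]
    [PerfectRing K p] {n : ℕ} (f : MvPolynomial (Fin n) K) : MvPolynomial (Fin n) K :=
  frobCoeff p (fun _ => p - 1) f

/-- The ideal `Φ(F_*(f•S)) = {Φ(F_*(f•h)) : h ∈ S}`, which computes the test ideal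
`τ(S, f^(1/p))`. -/
noncomputable def tauP {K : Type*} [Field K] (p : ℕ) [Fact p.Prime] [ExpChar K p]
    [PerfectRing K p] {n : ℕ} (f : MvPolynomial (Fin n) K) : Ideal (MvPolynomial (Fin n) K) :=
  Ideal.span {g | ∃ h, g = phi p (f * h)}

/-- The identification `S/(l) ≅ R = K[x_1,…,x_(n-1)]` for
`l = c₀^p + c₁^p x_1 + … + c_n^p x_n` with `c_n ≠ 0`: the algebra map `S → R` fixing
`x_1, …, x_(n-1)` and sending `x_n ↦ -c_n^(-p)(c₀^p + c₁^p x_1 + … + c_(n-1)^p x_(n-1))`.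
Here `S` has `m+1` variables and `R` has `m` variables. -/
noncomputable def substHom {K : Type*} [Field K] (p m : ℕ) (c0 : K) (c : Fin (m + 1) → K) :
    MvPolynomial (Fin (m + 1)) K →ₐ[K] MvPolynomial (Fin m) K :=
  aeval fun i : Fin (m + 1) =>
    if h : (i : ℕ) < m then X ⟨i, h⟩
    else -C ((c (Fin.last m))⁻¹ ^ p) *
      (C (c0 ^ p) + ∑ j : Fin m, C (c (Fin.castSucc j) ^ p) * X j)

/-- The polynomial `f` with `F_*f = Σ_(i=0)^(p-1) f_i F_*((x_1⋯x_(n-1))^(p-1) x_n^i)`,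
i.e. `f = Σ_i f_i^p (x_1⋯x_(n-1))^(p-1) x_n^i`, for `f_i ∈ K[x_1,…,x_(n-1)]`. -/
noncomputable def fGen {K : Type*} [Field K] (p m : ℕ)
    (fi : ℕ → MvPolynomial (Fin m) K) : MvPolynomial (Fin (m + 1)) K :=
  ∑ i ∈ Finset.range p, (rename Fin.castSucc (fi i)) ^ p *
    (∏ j : Fin m, X (Fin.castSucc j)) ^ (p - 1) * X (Fin.last m) ^ i

/-! The trace `Φ` is `p⁻¹`-linear, `Φ(g^p u) = g Φ(u)`, so `τ(S, f^(1/p))` is the set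
`{Φ(f h)}` itself. Since `Φ(f x_n^(p-1-i)) = f_i`, every `f_i` lies in `τ(S, f^(1/p))`, hence
in its image in `S/(l)`, whose degree-`d` part therefore has dimension `≥ 2`.
On the other side, `f̄ = Σ f_i^p μ^(p-1) L^i` with `μ = x_1 ⋯ x_(n-1)` and `L` the image of
`x_n`. The degree-`d` part of `Φ(f̄ h)` is `Φ` of the degree-`(pd + (n-1)(p-1))` part of `f̄ h`,
which only sees the constant terms of `L` and `h`; so it is a multiple of the single
polynomial `Σ γ^i f_i`, where `γ^p = L(0)`. -/

noncomputable def constExp (n q : ℕ) : Fin n →₀ ℕ := Finsupp.equivFunOnFinite.symm fun _ => q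

@[simp] lemma constExp_apply {n : ℕ} (q : ℕ) (i : Fin n) : constExp n q i = q := rfl

lemma degree_smul_add_constExp {n : ℕ} (p : ℕ) (e : Fin n →₀ ℕ) :
    (p • e + constExp n (p - 1)).degree = p * e.degree + n * (p - 1) := by
  simp [Finsupp.degree_eq_sum, Finset.sum_add_distrib, Finset.mul_sum]

lemma prod_univ_X_pow_eq_monomial {σ R : Type*} [CommSemiring R] [Fintype σ] (v : σ → ℕ) :
    ∏ i, (X i : MvPolynomial σ R) ^ v i = monomial (Finsupp.equivFunOnFinite.symm v) 1 := by
  rw [monomial_eq, C_1, one_mul, Finsupp.prod_fintype _ _ (fun _ => pow_zero _)]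
  rfl

section FrobeniusTrace

variable {K : Type*} [Field K] {p : ℕ} [Fact p.Prime] [ExpChar K p] [PerfectRing K p] {n : ℕ}

lemma mod_eq_pred_and_div_eq_iff (d e : Fin n →₀ ℕ) :
    ((∀ i, d i % p = p - 1) ∧ Finsupp.mapRange (· / p) (Nat.zero_div p) d = e) ↔
      d = p • e + constExp n (p - 1) := by
  have hp : 0 < p := (Fact.out : p.Prime).pos
  simp only [Finsupp.ext_iff, Finsupp.mapRange_apply, Finsupp.coe_add, Finsupp.coe_smul,
    Pi.add_apply, Pi.smul_apply, smul_eq_mul, constExp_apply, ← forall_and]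
  refine forall_congr' fun i => ?_
  rw [and_comm, Nat.div_mod_unique hp]
  omega

lemma coeff_phi (f : MvPolynomial (Fin n) K) (e : Fin n →₀ ℕ) :
    coeff e (phi p f) = (frobeniusEquiv K p).symm (coeff (p • e + constExp n (p - 1)) f) := by
  classical
  have hterm : ∀ d ∈ f.support,
      coeff e (if ∀ i, d i % p = p - 1 then
        monomial (Finsupp.mapRange (· / p) (Nat.zero_div p) d)
          ((frobeniusEquiv K p).symm (f.coeff d)) else 0) =
      if d = p • e + constExp n (p - 1) then (frobeniusEquiv K p).symm (f.coeff d) else 0 := by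
    intro d _
    have key := mod_eq_pred_and_div_eq_iff (p := p) d e
    split_ifs <;> simp_all [coeff_monomial]
  rw [phi, frobCoeff, coeff_sum, Finset.sum_congr rfl hterm, Finset.sum_ite_eq']
  split_ifs with h
  · rfl
  · rw [notMem_support_iff.mp h, map_zero]

lemma phi_zero : phi p (0 : MvPolynomial (Fin n) K) = 0 := by
  ext e; simp [coeff_phi]

lemma phi_add (f g : MvPolynomial (Fin n) K) : phi p (f + g) = phi p f + phi p g := by
  ext e; simp [coeff_phi]

lemma phi_sum {ι : Type*} (s : Finset ι) (f : ι → MvPolynomial (Fin n) K) :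
    phi p (∑ i ∈ s, f i) = ∑ i ∈ s, phi p (f i) := by
  ext e; simp [coeff_phi, coeff_sum]

lemma phi_monomial (e : Fin n →₀ ℕ) (a : K) :
    phi p (monomial e a) = if ∀ i, e i % p = p - 1 then
      monomial (Finsupp.mapRange (· / p) (Nat.zero_div p) e) ((frobeniusEquiv K p).symm a)
    else 0 := by
  classical
  rcases eq_or_ne a 0 with rfl | ha
  · simp [phi, frobCoeff]
  · simp [phi, frobCoeff, support_monomial, ha]

lemma phi_monomial_pow_mul_monomial (β e : Fin n →₀ ℕ) (a b : K) :
    phi p (monomial (p • β) (a ^ p) * monomial e b) = monomial β a * phi p (monomial e b) := by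
  have hp : 0 < p := (Fact.out : p.Prime).pos
  rw [monomial_mul, phi_monomial, phi_monomial]
  simp only [Finsupp.coe_add, Finsupp.coe_smul, Pi.add_apply, Pi.smul_apply, smul_eq_mul,
    Nat.mul_add_mod]
  have hexp : Finsupp.mapRange (· / p) (Nat.zero_div p) (p • β + e) =
      β + Finsupp.mapRange (· / p) (Nat.zero_div p) e := by
    ext i
    simp [Nat.mul_add_div hp]
  split_ifs
  · rw [monomial_mul, map_mul, frobeniusEquiv_symm_pow, hexp]
  · rw [mul_zero]

lemma phi_pow_mul (g u : MvPolynomial (Fin n) K) : phi p (g ^ p * u) = g * phi p u := by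
  induction u using MvPolynomial.induction_on' with
  | monomial e b =>
    induction g using MvPolynomial.induction_on' with
    | monomial β a => rw [monomial_pow, phi_monomial_pow_mul_monomial]
    | add f g hf hg => rw [add_pow_expChar, add_mul, phi_add, hf, hg, add_mul]
  | add u v hu hv => rw [mul_add, phi_add, hu, hv, phi_add, mul_add]

lemma phi_prod_X_pow (v : Fin n → ℕ) :
    phi p (∏ i, (X i : MvPolynomial (Fin n) K) ^ v i) =
      if ∀ i, v i % p = p - 1 then ∏ i, X i ^ (v i / p) else 0 := by
  rw [prod_univ_X_pow_eq_monomial, phi_monomial, prod_univ_X_pow_eq_monomial, map_one]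
  simp only [Finsupp.coe_equivFunOnFinite_symm]
  congr 3
  ext i
  simp

lemma phi_prod_X_pow_pred : phi p (∏ i, (X i : MvPolynomial (Fin n) K) ^ (p - 1)) = 1 := by
  have hp : 0 < p := (Fact.out : p.Prime).pos
  rw [phi_prod_X_pow, if_pos fun _ => Nat.mod_eq_of_lt (by omega)]
  simp [Nat.div_eq_of_lt (show p - 1 < p by omega)]

lemma mem_tauP {f g : MvPolynomial (Fin n) K} : g ∈ tauP p f ↔ ∃ h, g = phi p (f * h) := by
  refine ⟨fun hg => ?_, fun ⟨h, hg⟩ => Ideal.subset_span ⟨h, hg⟩⟩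
  induction hg using Submodule.span_induction with
  | mem x hx => exact hx
  | zero => exact ⟨0, by rw [mul_zero, phi_zero]⟩
  | add x y _ _ hx hy =>
    obtain ⟨h₁, rfl⟩ := hx
    obtain ⟨h₂, rfl⟩ := hy
    exact ⟨h₁ + h₂, by rw [mul_add, phi_add]⟩
  | smul r x _ hx =>
    obtain ⟨h, rfl⟩ := hx
    exact ⟨r ^ p * h, by rw [smul_eq_mul, mul_left_comm, phi_pow_mul]⟩

lemma homogeneousComponent_phi (u : MvPolynomial (Fin n) K) (d : ℕ) :
    homogeneousComponent d (phi p u) = phi p (homogeneousComponent (p * d + n * (p - 1)) u) := by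
  have hp : 0 < p := (Fact.out : p.Prime).pos
  ext e
  rw [coeff_homogeneousComponent, coeff_phi, coeff_phi, coeff_homogeneousComponent,
    degree_smul_add_constExp]
  have hdeg : p * e.degree + n * (p - 1) = p * d + n * (p - 1) ↔ e.degree = d := by
    rw [Nat.add_right_cancel_iff, Nat.mul_left_cancel_iff hp]
  split_ifs <;> simp_all

end FrobeniusTrace

lemma homogeneousComponent_mul_of_isHomogeneous {σ R : Type*} [CommSemiring R] {N : ℕ}
    {u : MvPolynomial σ R} (hu : u.IsHomogeneous N) (v : MvPolynomial σ R) :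
    homogeneousComponent N (u * v) = u * C (constantCoeff v) := by
  conv_lhs => rw [← sum_homogeneousComponent v]
  rw [Finset.mul_sum, map_sum, Finset.sum_eq_single 0]
  · rw [homogeneousComponent_of_mem (hu.mul (homogeneousComponent_isHomogeneous 0 v)),
      if_pos (add_zero N).symm, homogeneousComponent_zero]
    rfl
  · intro j _ hj
    rw [homogeneousComponent_of_mem (hu.mul (homogeneousComponent_isHomogeneous j v)),
      if_neg (by omega)]
  · simp

section Restriction

variable {K : Type*} [Field K] {p : ℕ} [Fact p.Prime] [ExpChar K p] [PerfectRing K p] {n : ℕ}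

lemma homogeneousComponent_phi_sum_mul {d : ℕ} {fi : ℕ → MvPolynomial (Fin n) K}
    (hhom : ∀ i < p, (fi i).IsHomogeneous d) (L h : MvPolynomial (Fin n) K) :
    homogeneousComponent d
        (phi p ((∑ i ∈ Finset.range p, fi i ^ p * (∏ j, X j) ^ (p - 1) * L ^ i) * h)) =
      (frobeniusEquiv K p).symm (constantCoeff h) •
        ∑ i ∈ Finset.range p, (frobeniusEquiv K p).symm (constantCoeff L) ^ i • fi i := by
  set γ := (frobeniusEquiv K p).symm (constantCoeff L)
  set a := (frobeniusEquiv K p).symm (constantCoeff h)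
  have hterm : ∀ i ∈ Finset.range p,
      homogeneousComponent (p * d + n * (p - 1)) (fi i ^ p * (∏ j, X j) ^ (p - 1) * L ^ i * h) =
        (C a * C (γ ^ i) * fi i) ^ p * ∏ j, X j ^ (p - 1) := by
    intro i hi
    have hhom' : (fi i ^ p * (∏ j : Fin n, X j) ^ (p - 1)).IsHomogeneous (p * d + n * (p - 1)) := by
      convert ((hhom i (Finset.mem_range.mp hi)).pow p).mul
        ((IsHomogeneous.prod _ _ (fun _ => 1) fun j _ => isHomogeneous_X K j).pow (p - 1)) using 1
      simp [mul_comm]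
    rw [mul_assoc _ (L ^ i), homogeneousComponent_mul_of_isHomogeneous hhom', map_mul, map_pow,
      ← frobeniusEquiv_symm_pow_p K p (constantCoeff L),
      ← frobeniusEquiv_symm_pow_p K p (constantCoeff h), Finset.prod_pow]
    simp only [map_mul, map_pow]
    ring
  rw [homogeneousComponent_phi, Finset.sum_mul, map_sum, Finset.sum_congr rfl hterm, phi_sum]
  simp only [phi_pow_mul, phi_prod_X_pow_pred, mul_one, Finset.smul_sum, smul_eq_C_mul,
    map_pow, mul_assoc]

lemma tauP_inf_homogeneousSubmodule_le_span {d : ℕ} {fi : ℕ → MvPolynomial (Fin n) K}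
    (hhom : ∀ i < p, (fi i).IsHomogeneous d) (L : MvPolynomial (Fin n) K) :
    Submodule.restrictScalars K
        (tauP p (∑ i ∈ Finset.range p, fi i ^ p * (∏ j, X j) ^ (p - 1) * L ^ i)) ⊓
        homogeneousSubmodule (Fin n) K d ≤
      K ∙ ∑ i ∈ Finset.range p, (frobeniusEquiv K p).symm (constantCoeff L) ^ i • fi i := by
  rintro w ⟨hw, hwd⟩
  obtain ⟨h, rfl⟩ := mem_tauP.mp hw
  rw [← homogeneousComponent_of_mem hwd |>.trans (if_pos rfl), homogeneousComponent_phi_sum_mul hhom]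
  exact Submodule.smul_mem _ _ (Submodule.mem_span_singleton_self _)

end Restriction

section Substitution

variable {K : Type*} [Field K] {p : ℕ} {m : ℕ}

lemma substHom_X_castSucc (c0 : K) (c : Fin (m + 1) → K) (j : Fin m) :
    substHom p m c0 c (X (Fin.castSucc j)) = X j := by
  simp [substHom]

lemma substHom_rename_castSucc (c0 : K) (c : Fin (m + 1) → K) (q : MvPolynomial (Fin m) K) :
    substHom p m c0 c (rename Fin.castSucc q) = q := by
  rw [← AlgHom.comp_apply, show (substHom p m c0 c).comp (rename Fin.castSucc) = AlgHom.id K _ from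
    algHom_ext fun j => by simp [substHom_X_castSucc], AlgHom.id_apply]

lemma substHom_fGen (c0 : K) (c : Fin (m + 1) → K) (fi : ℕ → MvPolynomial (Fin m) K) :
    substHom p m c0 c (fGen p m fi) = ∑ i ∈ Finset.range p,
      fi i ^ p * (∏ j, X j) ^ (p - 1) * substHom p m c0 c (X (Fin.last m)) ^ i := by
  simp [fGen, substHom_rename_castSucc, substHom_X_castSucc]

variable [Fact p.Prime] [ExpChar K p] [PerfectRing K p]

lemma prod_X_castSucc_pow_mul_X_last_pow (q j : ℕ) :
    (∏ k : Fin m, X (Fin.castSucc k) : MvPolynomial (Fin (m + 1)) K) ^ q * X (Fin.last m) ^ j =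
      ∏ i, X i ^ Fin.snoc (α := fun _ => ℕ) (fun _ => q) j i := by
  simp [Fin.prod_univ_castSucc, Finset.prod_pow]

lemma phi_prod_X_castSucc_pow_mul_X_last_pow {j : ℕ} (hj : j < 2 * p - 1) :
    phi p ((∏ k : Fin m, X (Fin.castSucc k)) ^ (p - 1) * X (Fin.last m) ^ j) =
      if j = p - 1 then (1 : MvPolynomial (Fin (m + 1)) K) else 0 := by
  split_ifs with hjp
  · rw [hjp, ← Finset.prod_pow, ← Fin.prod_univ_castSucc (fun i => X i ^ (p - 1)),
      phi_prod_X_pow_pred]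
  · rw [prod_X_castSucc_pow_mul_X_last_pow, phi_prod_X_pow, if_neg]
    intro hmod
    have hlast : j % p = p - 1 := by simpa using hmod (Fin.last m)
    rcases lt_or_ge j p with hjp' | hjp'
    · exact hjp (by rwa [Nat.mod_eq_of_lt hjp'] at hlast)
    · rw [Nat.mod_eq_sub_mod hjp', Nat.mod_eq_of_lt (by omega)] at hlast
      omega

lemma phi_fGen_mul_X_last_pow (fi : ℕ → MvPolynomial (Fin m) K) {i : ℕ} (hi : i < p) :
    phi p (fGen p m fi * X (Fin.last m) ^ (p - 1 - i)) = rename Fin.castSucc (fi i) := by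
  have hterm : ∀ k ∈ Finset.range p,
      phi p ((rename Fin.castSucc (fi k)) ^ p * (∏ j : Fin m, X (Fin.castSucc j)) ^ (p - 1) *
        X (Fin.last m) ^ k * X (Fin.last m) ^ (p - 1 - i)) =
      if k = i then rename Fin.castSucc (fi k) else 0 := by
    intro k hk
    have hk : k < p := Finset.mem_range.mp hk
    rw [mul_assoc, mul_assoc, ← pow_add, phi_pow_mul,
      phi_prod_X_castSucc_pow_mul_X_last_pow (by omega)]
    simp only [mul_ite, mul_one, mul_zero]
    exact if_congr (by omega) rfl rfl
  rw [fGen, Finset.sum_mul, phi_sum, Finset.sum_congr rfl hterm, Finset.sum_ite_eq',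
    if_pos (Finset.mem_range.mpr hi)]

lemma mem_map_tauP_fGen (c0 : K) (c : Fin (m + 1) → K) (fi : ℕ → MvPolynomial (Fin m) K)
    {i : ℕ} (hi : i < p) :
    fi i ∈ Ideal.map (substHom p m c0 c).toRingHom (tauP p (fGen p m fi)) := by
  have hmem : phi p (fGen p m fi * X (Fin.last m) ^ (p - 1 - i)) ∈ tauP p (fGen p m fi) :=
    mem_tauP.mpr ⟨_, rfl⟩
  simpa [phi_fGen_mul_X_last_pow fi hi, substHom_rename_castSucc] using
    Ideal.mem_map_of_mem (substHom p m c0 c).toRingHom hmem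

end Substitution

theorem statement10_general {K : Type*} [Field K] (p m : ℕ) [Fact p.Prime] [ExpChar K p]
    [PerfectRing K p] (d : ℕ) (fi : ℕ → MvPolynomial (Fin m) K)
    (hhom : ∀ i < p, (fi i).IsHomogeneous d)
    (hspan : 2 ≤ Module.finrank K ↥(Submodule.span K (fi '' Set.Iio p)))
    (c0 : K) (c : Fin (m + 1) → K) :
    Submodule.restrictScalars K (Ideal.map (substHom p m c0 c).toRingHom (tauP p (fGen p m fi))) ⊓
          homogeneousSubmodule (Fin m) K d ≠
        Submodule.restrictScalars K (tauP p (substHom p m c0 c (fGen p m fi))) ⊓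
          homogeneousSubmodule (Fin m) K d ∧
      2 ≤ Module.finrank K
        ↥(Submodule.restrictScalars K
            (Ideal.map (substHom p m c0 c).toRingHom (tauP p (fGen p m fi))) ⊓
          homogeneousSubmodule (Fin m) K d) ∧
      Module.finrank K
        ↥(Submodule.restrictScalars K (tauP p (substHom p m c0 c (fGen p m fi))) ⊓
          homogeneousSubmodule (Fin m) K d) ≤ 1 := by
  set A := Submodule.restrictScalars K
    (Ideal.map (substHom p m c0 c).toRingHom (tauP p (fGen p m fi))) ⊓
      homogeneousSubmodule (Fin m) K d
  set B := Submodule.restrictScalars K (tauP p (substHom p m c0 c (fGen p m fi))) ⊓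
      homogeneousSubmodule (Fin m) K d
  have : Module.Finite K (homogeneousSubmodule (Fin m) K d) :=
    Module.Finite.iff_fg.mpr (homogeneousSubmodule_fg _ _ d)
  have : Module.Finite K A := Submodule.finiteDimensional_of_le inf_le_right
  have hspan_le : Submodule.span K (fi '' Set.Iio p) ≤ A :=
    Submodule.span_le.mpr <| Set.image_subset_iff.mpr fun i hi =>
      ⟨mem_map_tauP_fGen c0 c fi hi, hhom i hi⟩
  have hA : 2 ≤ Module.finrank K A := hspan.trans (Submodule.finrank_mono hspan_le)
  have hB : Module.finrank K B ≤ 1 := by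
    have hle := tauP_inf_homogeneousSubmodule_le_span hhom (substHom p m c0 c (X (Fin.last m)))
    rw [← substHom_fGen] at hle
    exact (Submodule.finrank_mono hle).trans ((finrank_span_le_card _).trans (by simp))
  exact ⟨fun hAB => by rw [hAB] at hA; omega, hA, hB⟩

/-- with `f_i ∈ K[x_1,…,x_(n-1)]` homogeneous of common degree `d` spanning a
`K`-vector space of dimension ≥ 2, and `l = c₀^p + Σ c_j^p x_j` with `c_n ≠ 0`, the image
ideal `τ(S, f^(1/p))·S/(l)` differs from `τ(S/(l), f̄^(1/p))`: their degree-`d` graded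
pieces are different subspaces of `(S/(l))_d`, the former of dimension ≥ 2 and the latter of
dimension ≤ 1.  (Here `n = m+1 ≥ 3`.) -/
theorem statement10 {K : Type*} [Field K] [Infinite K] (p m : ℕ) [Fact p.Prime] [ExpChar K p]
    [PerfectRing K p] (hm : 2 ≤ m) (d : ℕ) (fi : ℕ → MvPolynomial (Fin m) K)
    (hhom : ∀ i < p, (fi i).IsHomogeneous d)
    (hspan : 2 ≤ Module.finrank K ↥(Submodule.span K (fi '' Set.Iio p)))
    (c0 : K) (c : Fin (m + 1) → K) (hcn : c (Fin.last m) ≠ 0) :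
    Submodule.restrictScalars K (Ideal.map (substHom p m c0 c).toRingHom (tauP p (fGen p m fi))) ⊓
          homogeneousSubmodule (Fin m) K d ≠
        Submodule.restrictScalars K (tauP p (substHom p m c0 c (fGen p m fi))) ⊓
          homogeneousSubmodule (Fin m) K d ∧
      2 ≤ Module.finrank K
        ↥(Submodule.restrictScalars K
            (Ideal.map (substHom p m c0 c).toRingHom (tauP p (fGen p m fi))) ⊓
          homogeneousSubmodule (Fin m) K d) ∧
      Module.finrank K
        ↥(Submodule.restrictScalars K (tauP p (substHom p m c0 c (fGen p m fi))) ⊓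
          homogeneousSubmodule (Fin m) K d) ≤ 1 :=
  statement10_general p m d fi hhom hspan c0 c
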